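/- arXiv:1404.1568 — 3 statements merged into one kernel-verified Lean document; each statement's English description precedes it below -/
import Mathlib

section
/- Let A be an m×n integer matrix of full column rank all of whose sub-determinants are bounded in absolute value by Δ. Let B be a set of n row indices such that the rows a_i, i ∈ B, are linearly independent, and let i ∈ B. Then the Euclidean distance from the unit vector a_i/‖a_i‖ to the linear span of the rows a_j, j ∈ B \ {i}, is at least 1/(n·Δ²). -/
/-!
Let `N` be the invertible `n × n` submatrix of `A` with rows `a_j`, `j ∈ B`, and let `c` be the
column of `N⁻¹` belonging to `i`. Then `⟪a_i, c⟫ = 1` and `c` is orthogonal to every other `a_j`,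
so for every `y` in their span, `‖a_i‖⁻¹ = ⟪‖a_i‖⁻¹ • a_i - y, c⟫ ≤ ‖‖a_i‖⁻¹ • a_i - y‖ ‖c‖`.
By Cramer's rule the entries of `c` are `(n-1)`-minors divided by the nonzero integer `det N`,
so they are bounded by `Δ`, as are the entries of `a_i`; hence `‖a_i‖ ‖c‖ ≤ (√n Δ)² = n Δ²`.
-/

open Matrix RealInnerProductSpace

namespace Matrix

variable {m n R : Type*} [CommRing R] [LinearOrder R]

def SubdetBoundedBy (A : Matrix m n R) (Δ : R) : Prop :=
  ∀ k : ℕ, ∀ f : Fin k → m, ∀ g : Fin k → n,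
    Function.Injective f → Function.Injective g → |(A.submatrix f g).det| ≤ Δ

namespace SubdetBoundedBy

variable {A : Matrix m n R} {Δ : R}

theorem submatrix {m' n' : Type*} (hA : A.SubdetBoundedBy Δ) {e : m' → m} {e' : n' → n}
    (he : Function.Injective e) (he' : Function.Injective e') :
    (A.submatrix e e').SubdetBoundedBy Δ := fun k f g hf hg => by
  simpa only [submatrix_submatrix] using hA k (e ∘ f) (e' ∘ g) (he.comp hf) (he'.comp hg)

theorem abs_apply_le (hA : A.SubdetBoundedBy Δ) (i : m) (j : n) : |A i j| ≤ Δ := by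
  simpa using hA 1 (fun _ => i) (fun _ => j) (Function.injective_of_subsingleton _)
    (Function.injective_of_subsingleton _)

variable [IsStrictOrderedRing R]

theorem one_le (hA : A.SubdetBoundedBy Δ) : 1 ≤ Δ := by
  simpa using hA 0 Fin.elim0 Fin.elim0 (Function.injective_of_subsingleton _)
    (Function.injective_of_subsingleton _)

theorem abs_adjugate_apply_le {k : ℕ} {M : Matrix (Fin k) (Fin k) R} (hM : M.SubdetBoundedBy Δ)
    (i j : Fin k) : |M.adjugate i j| ≤ Δ := by
  cases k with
  | zero => exact i.elim0
  | succ k =>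
    rw [adjugate_fin_succ_eq_det_submatrix, abs_mul, abs_pow, abs_neg, abs_one, one_pow, one_mul]
    exact hM k j.succAbove i.succAbove Fin.succAbove_right_injective
      Fin.succAbove_right_injective

end SubdetBoundedBy

theorem abs_inv_map_intCast_apply_le {k : ℕ} {M : Matrix (Fin k) (Fin k) ℤ} {Δ : ℤ}
    (hM : M.SubdetBoundedBy Δ) (hdet : M.det ≠ 0) (i j : Fin k) :
    |(M.map ((↑) : ℤ → ℝ))⁻¹ i j| ≤ Δ := by
  have hadj_cast : (M.map ((↑) : ℤ → ℝ)).adjugate = M.adjugate.map (↑) :=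
    ((Int.castRingHom ℝ).map_adjugate M).symm
  have hdet_ge : (1 : ℝ) ≤ |(M.det : ℝ)| := by exact_mod_cast Int.one_le_abs hdet
  have hadj_le : |(M.adjugate i j : ℝ)| ≤ Δ := by exact_mod_cast hM.abs_adjugate_apply_le i j
  rw [inv_def, ← Int.cast_det, hadj_cast, smul_apply, map_apply, smul_eq_mul,
    Ring.inverse_eq_inv', abs_mul, abs_inv]
  calc |(M.det : ℝ)|⁻¹ * |(M.adjugate i j : ℝ)| ≤ 1 * Δ :=
        mul_le_mul (inv_le_one_of_one_le₀ hdet_ge) hadj_le (abs_nonneg _) zero_le_one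
    _ = Δ := one_mul _

theorem det_ne_zero_of_linearIndependent_toLp_rows {ι : Type*} [Fintype ι] [DecidableEq ι]
    {M : Matrix ι ι ℤ}
    (h : LinearIndependent ℝ fun k => WithLp.toLp 2 fun l => (M k l : ℝ)) :
    M.det ≠ 0 := by
  have h_rows : LinearIndependent ℝ (M.map ((↑) : ℤ → ℝ)) :=
    h.map' (WithLp.linearEquiv 2 ℝ (ι → ℝ)).toLinearMap (LinearEquiv.ker _)
  have h_det : (M.map ((↑) : ℤ → ℝ)).det ≠ 0 :=
    ((isUnit_iff_isUnit_det _).1 (linearIndependent_rows_iff_isUnit.1 h_rows)).ne_zero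
  rw [← Int.cast_det] at h_det
  exact_mod_cast h_det

end Matrix

theorem EuclideanSpace.norm_le_sqrt_card_mul {ι : Type*} [Fintype ι] {x : EuclideanSpace ℝ ι}
    {d : ℝ} (hd : 0 ≤ d) (hx : ∀ l, |x l| ≤ d) : ‖x‖ ≤ √(Fintype.card ι) * d := by
  rw [EuclideanSpace.norm_eq, ← Real.sqrt_sq hd, ← Real.sqrt_mul (Nat.cast_nonneg _)]
  gcongr
  calc ∑ l, ‖x l‖ ^ 2 ≤ ∑ _l : ι, d ^ 2 := by
        gcongr with l
        exact (Real.norm_eq_abs _).trans_le (hx l)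
    _ = Fintype.card ι * d ^ 2 := by simp

theorem Matrix.SubdetBoundedBy.norm_toLp_row_le {m n : Type*} [Fintype n]
    {A : Matrix m n ℤ} {Δ : ℤ} (hA : A.SubdetBoundedBy Δ) (i : m) :
    ‖WithLp.toLp 2 fun l => (A i l : ℝ)‖ ≤ √(Fintype.card n) * Δ := by
  refine EuclideanSpace.norm_le_sqrt_card_mul (by exact_mod_cast zero_le_one.trans hA.one_le)
    fun l => ?_
  show |(A i l : ℝ)| ≤ Δ
  exact_mod_cast hA.abs_apply_le i l

theorem inner_toLp_row_toLp_col {ι : Type*} [Fintype ι] (N P : Matrix ι ι ℝ) (k j : ι) :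
    ⟪WithLp.toLp 2 (N k), WithLp.toLp 2 (fun l => P l j)⟫ = (N * P) k j := by
  simp [EuclideanSpace.inner_toLp_toLp, mul_apply, dotProduct, mul_comm]

/-- The witness is the `j`-th column of the inverse of `M` over `ℝ`. -/
theorem Matrix.SubdetBoundedBy.exists_inner_toLp_row_eq_ite {k : ℕ}
    {M : Matrix (Fin k) (Fin k) ℤ} {Δ : ℤ} (hM : M.SubdetBoundedBy Δ) (hdet : M.det ≠ 0)
    (j : Fin k) :
    ∃ c : EuclideanSpace ℝ (Fin k),
      (∀ r, ⟪WithLp.toLp 2 fun l => (M r l : ℝ), c⟫ = if r = j then 1 else 0) ∧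
        ‖c‖ ≤ √k * Δ := by
  set N := M.map ((↑) : ℤ → ℝ)
  have hN : IsUnit N.det := by
    rw [← Int.cast_det, isUnit_iff_ne_zero]
    exact_mod_cast hdet
  refine ⟨WithLp.toLp 2 fun l => N⁻¹ l j, fun r => ?_, ?_⟩
  · rw [← one_apply, ← mul_nonsing_inv N hN]
    exact inner_toLp_row_toLp_col N N⁻¹ r j
  · simpa using EuclideanSpace.norm_le_sqrt_card_mul
      (by exact_mod_cast zero_le_one.trans hM.one_le) fun l =>
        abs_inv_map_intCast_apply_le hM hdet l j

theorem abs_inner_div_norm_le_infDist_span {E : Type*} [NormedAddCommGroup E]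
    [InnerProductSpace ℝ E] {s : Set E} {c : E} (hs : ∀ y ∈ s, ⟪y, c⟫ = 0) (x : E) :
    |⟪x, c⟫| / ‖c‖ ≤ Metric.infDist x (Submodule.span ℝ s) := by
  have hspan : Submodule.span ℝ s ≤ (ℝ ∙ c)ᗮ := Submodule.span_le.2 fun y hy =>
    Submodule.mem_orthogonal_singleton_iff_inner_left.2 (hs y hy)
  refine (Metric.le_infDist ⟨0, Submodule.zero_mem _⟩).2 fun y hy => ?_
  have hyc : ⟪y, c⟫ = 0 := Submodule.mem_orthogonal_singleton_iff_inner_left.1 (hspan hy)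
  calc |⟪x, c⟫| / ‖c‖ = |⟪x - y, c⟫| / ‖c‖ := by rw [inner_sub_left, hyc, sub_zero]
    _ ≤ ‖x - y‖ := div_le_of_le_mul₀ (norm_nonneg _) (norm_nonneg _)
        (abs_real_inner_le_norm _ _)
    _ = dist x y := (dist_eq_norm x y).symm

theorem one_div_le_infDist_span_of_inner_eq_one {E : Type*} [NormedAddCommGroup E]
    [InnerProductSpace ℝ E] {s : Set E} {u c : E} {D : ℝ} (hs : ∀ y ∈ s, ⟪y, c⟫ = 0)
    (hu : ⟪u, c⟫ = 1) (hD : ‖u‖ * ‖c‖ ≤ D) :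
    1 / D ≤ Metric.infDist (‖u‖⁻¹ • u) (Submodule.span ℝ s) := by
  have hpos : 0 < ‖u‖ * ‖c‖ := one_pos.trans_le (hu ▸ real_inner_le_norm u c)
  calc 1 / D ≤ 1 / (‖u‖ * ‖c‖) := one_div_le_one_div_of_le hpos hD
    _ = |⟪‖u‖⁻¹ • u, c⟫| / ‖c‖ := by
        rw [real_inner_smul_left, hu, mul_one, abs_inv, abs_norm, one_div, mul_inv, div_eq_mul_inv]
    _ ≤ _ := abs_inner_div_norm_le_infDist_span hs _

theorem stmt0_general (m n : ℕ) (A : Matrix (Fin m) (Fin n) ℤ) (Δ : ℕ)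
    (hsub : ∀ k : ℕ, ∀ f : Fin k → Fin m, ∀ g : Fin k → Fin n,
      Function.Injective f → Function.Injective g →
      |(A.submatrix f g).det| ≤ (Δ : ℤ))
    (a : Fin m → EuclideanSpace ℝ (Fin n))
    (ha : ∀ i l, a i l = (A i l : ℝ))
    (B : Finset (Fin m)) (hB : B.card = n)
    (hind : LinearIndependent ℝ (fun j : B => a j))
    (i : Fin m) (hi : i ∈ B) :
    (1 : ℝ) / (n * Δ ^ 2) ≤
      Metric.infDist ((‖a i‖)⁻¹ • a i)
        (Submodule.span ℝ (a '' (B.erase i : Finset (Fin m))) : Set (EuclideanSpace ℝ (Fin n))) := by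
  have hA : A.SubdetBoundedBy (Δ : ℤ) := hsub
  obtain rfl : a = fun i => WithLp.toLp 2 fun l => (A i l : ℝ) :=
    funext fun i => by ext l; exact ha i l
  set f := B.orderEmbOfFin hB
  have hf_range : Set.range f = B := B.range_orderEmbOfFin hB
  obtain ⟨j, rfl⟩ : i ∈ Set.range f := hf_range ▸ hi
  have hdet : (A.submatrix f id).det ≠ 0 := det_ne_zero_of_linearIndependent_toLp_rows <|
    hind.comp (fun k => ⟨f k, B.orderEmbOfFin_mem hB k⟩) fun _ _ h =>
      f.injective (congrArg Subtype.val h)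
  obtain ⟨c, hinner, hc_norm⟩ :=
    (hA.submatrix f.injective Function.injective_id).exists_inner_toLp_row_eq_ite hdet j
  have hperp : ∀ t ∈ B.erase (f j), ⟪WithLp.toLp 2 fun l => (A t l : ℝ), c⟫ = 0 := by
    intro t ht
    obtain ⟨ht_ne, ht_mem⟩ := Finset.mem_erase.1 ht
    obtain ⟨k, rfl⟩ : t ∈ Set.range f := hf_range ▸ ht_mem
    exact (hinner k).trans (if_neg (ne_of_apply_ne f ht_ne))
  refine one_div_le_infDist_span_of_inner_eq_one (Set.forall_mem_image.2 hperp)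
    ((hinner j).trans (if_pos rfl)) ?_
  have ha_norm := hA.norm_toLp_row_le (f j)
  push_cast [Fintype.card_fin] at hc_norm ha_norm
  calc _ ≤ (√n * Δ) * (√n * Δ) := mul_le_mul ha_norm hc_norm (norm_nonneg _) (by positivity)
    _ = n * Δ ^ 2 := by rw [mul_mul_mul_comm, Real.mul_self_sqrt (Nat.cast_nonneg n), sq]

/-- An integer matrix with full column rank whose sub-determinants are
bounded by `Δ` satisfies: the distance from a normalized row to the span of the
other rows of a basis is at least `1/(n·Δ²)`. -/
theorem stmt0 (m n : ℕ) (A : Matrix (Fin m) (Fin n) ℤ) (Δ : ℕ) (hΔ : 1 ≤ Δ)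
    (hrank : A.rank = n)
    (hsub : ∀ k : ℕ, ∀ f : Fin k → Fin m, ∀ g : Fin k → Fin n,
      Function.Injective f → Function.Injective g →
      |(A.submatrix f g).det| ≤ (Δ : ℤ))
    (a : Fin m → EuclideanSpace ℝ (Fin n))
    (ha : ∀ i l, a i l = (A i l : ℝ))
    (B : Finset (Fin m)) (hB : B.card = n)
    (hind : LinearIndependent ℝ (fun j : B => a j))
    (i : Fin m) (hi : i ∈ B) :
    (1 : ℝ) / (n * Δ ^ 2) ≤
      Metric.infDist ((‖a i‖)⁻¹ • a i)
        (Submodule.span ℝ (a '' (B.erase i : Finset (Fin m))) : Set (EuclideanSpace ℝ (Fin n))) :=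
  stmt0_general m n A Δ hsub a ha B hB hind i hi
end

section
/- Suppose unit vectors a_1,…,a_m in ℝⁿ satisfy the δ-distance property. For i ≥ 2 let a_i* be the orthogonal projection of a_i onto the orthogonal complement of a_1. Then the nonzero vectors among a_2*,…,a_m*, after rescaling to unit length, also satisfy the δ-distance property. -/
open RealInnerProductSpace

/-- The δ-distance property of a family of vectors: whenever `a j` is not in the span of
`{a i : i ∈ I}`, its distance to that span is at least `δ`. -/
def DeltaDistanceProperty {ι : Type*} {n : ℕ} (δ : ℝ) (a : ι → EuclideanSpace ℝ (Fin n)) : Prop :=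
  ∀ (I : Set ι) (j : ι),
    a j ∉ Submodule.span ℝ (a '' I) →
    δ ≤ Metric.infDist (a j) (Submodule.span ℝ (a '' I) : Set (EuclideanSpace ℝ (Fin n)))

/-!
Let `P` be the orthogonal projection onto `a₀ᗮ` and `bᵢ = P aᵢ / ‖P aᵢ‖`. Given `I` and `j` with
`bⱼ ∉ S = span {bᵢ : i ∈ I} = span {P aᵢ : i ∈ I}`, put `T = span {aᵢ : i ∈ I ∪ {0}}`. Since `P`
maps `T` onto `S`, `aⱼ ∉ T`; moreover `S ≤ T` and `aⱼ - P aⱼ ∈ T`, so each `s ∈ S` gives the point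
`s + (aⱼ - P aⱼ) ∈ T` at distance `‖P aⱼ - s‖` from `aⱼ`. Hence, as `‖P aⱼ‖ ≤ 1`,
`δ ≤ d(aⱼ, T) ≤ d(P aⱼ, S) ≤ d(P aⱼ, S) / ‖P aⱼ‖ = d(bⱼ, S)`.
-/

namespace Metric

variable {E : Type*} [SeminormedAddCommGroup E]

theorem infDist_le_infDist_of_sub_mem {R : Type*} [Ring R] [Module R E] {S T : Submodule R E}
    (hST : S ≤ T) {x y : E} (hxy : x - y ∈ T) :
    infDist x (T : Set E) ≤ infDist y (S : Set E) := by
  refine (le_infDist ⟨0, S.zero_mem⟩).2 fun s hs => ?_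
  calc infDist x (T : Set E) ≤ dist x (s + (x - y)) :=
        infDist_le_dist_of_mem (T.add_mem (hST hs) hxy)
    _ = dist y s := by rw [dist_eq_norm, dist_eq_norm]; congr 1; abel

open Pointwise in
theorem infDist_smul_submodule {𝕜 : Type*} [NormedField 𝕜] [NormedSpace 𝕜 E]
    (S : Submodule 𝕜 E) {c : 𝕜} (hc : c ≠ 0) (x : E) :
    infDist (c • x) (S : Set E) = ‖c‖ * infDist x (S : Set E) := by
  have hcS : c • (S : Set E) = S := by
    ext y
    simp [Set.mem_smul_set_iff_inv_smul_mem₀ hc, S.smul_mem_iff (inv_ne_zero hc)]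
  rw [← infDist_smul₀ hc, hcS]

end Metric

namespace Submodule

theorem span_image_smul_eq {R V ι : Type*} [DivisionRing R] [AddCommGroup V] [Module R V]
    {c : ι → R} (hc : ∀ i, c i ≠ 0) (v : ι → V) (s : Set ι) :
    span R ((fun i => c i • v i) '' s) = span R (v '' s) := by
  apply le_antisymm <;> refine span_le.2 ?_ <;> rintro _ ⟨i, hi, rfl⟩
  · exact smul_mem _ _ (subset_span ⟨i, hi, rfl⟩)
  · simpa [smul_smul, inv_mul_cancel₀ (hc i)] using
      smul_mem (span R ((fun i => c i • v i) '' s)) (c i)⁻¹ (subset_span ⟨i, hi, rfl⟩)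

variable {𝕜 E : Type*} [RCLike 𝕜] [NormedAddCommGroup E] [InnerProductSpace 𝕜 E]
  (K : Submodule 𝕜 E) [K.HasOrthogonalProjection] (s : Set E)

theorem starProjection_orthogonal_mem_span_image {x : E} (hx : x ∈ K ⊔ span 𝕜 s) :
    Kᗮ.starProjection x ∈ span 𝕜 (Kᗮ.starProjection '' s) := by
  obtain ⟨k, hk, y, hy, rfl⟩ := mem_sup.1 hx
  have hPy := apply_mem_span_image_of_mem_span Kᗮ.starProjection.toLinearMap hy
  rw [ContinuousLinearMap.coe_coe] at hPy
  rwa [map_add, starProjection_orthogonal_apply_eq_zero hk, zero_add]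

theorem span_starProjection_orthogonal_image_le :
    span 𝕜 (Kᗮ.starProjection '' s) ≤ K ⊔ span 𝕜 s := span_le.2 <| by
  rintro _ ⟨y, hy, rfl⟩
  rw [SetLike.mem_coe, starProjection_orthogonal_val]
  exact sub_mem (mem_sup_right (subset_span hy)) (mem_sup_left (K.starProjection_apply_mem y))

end Submodule

open Metric Submodule

theorem stmt2_general (m n : ℕ) (δ : ℝ)
    (a : Fin (m+1) → EuclideanSpace ℝ (Fin n))
    (hunit : ∀ i, ‖a i‖ = 1)
    (hdist : DeltaDistanceProperty δ a)
    (astar : Fin (m+1) → EuclideanSpace ℝ (Fin n))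
    (hastar : ∀ i, astar i =
      (Submodule.orthogonalProjectionOnto ((ℝ ∙ a 0)ᗮ) (a i) : EuclideanSpace ℝ (Fin n))) :
    DeltaDistanceProperty δ
      (fun i : {i : Fin (m+1) // i ≠ 0 ∧ astar i ≠ 0} => (‖astar i.1‖)⁻¹ • astar i.1) := by
  intro I j hj
  set K := ℝ ∙ a 0
  obtain rfl : astar = fun i => Kᗮ.starProjection (a i) := funext hastar
  beta_reduce at hj ⊢
  set s := a '' (Subtype.val '' I)
  set T := K ⊔ span ℝ s
  have hS : span ℝ ((fun i => ‖Kᗮ.starProjection (a i.1)‖⁻¹ • Kᗮ.starProjection (a i.1)) '' I) =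
      span ℝ (Kᗮ.starProjection '' s) := by
    rw [span_image_smul_eq (fun i => inv_ne_zero (norm_ne_zero_iff.2 i.2.2)), Set.image_image,
      Set.image_image]
  have hajT : a j ∉ T := fun h =>
    hj (hS ▸ smul_mem _ _ (starProjection_orthogonal_mem_span_image K s h))
  have hδT : δ ≤ infDist (a j) T := by
    simpa only [Set.image_insert_eq, span_insert, T] using hdist (insert 0 (Subtype.val '' I)) j
      (by simpa only [Set.image_insert_eq, span_insert] using hajT)
  have hsub : a j - Kᗮ.starProjection (a j) ∈ T := mem_sup_left (by simp)
  have hpos : 0 < ‖Kᗮ.starProjection (a j)‖ := norm_pos_iff.2 j.2.2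
  have hnorm : ‖Kᗮ.starProjection (a j)‖ ≤ 1 := hunit j ▸ norm_starProjection_apply_le _ _
  rw [hS]
  calc δ ≤ infDist (a j) T := hδT
    _ ≤ infDist (Kᗮ.starProjection (a j)) (span ℝ (Kᗮ.starProjection '' s)) :=
        infDist_le_infDist_of_sub_mem (span_starProjection_orthogonal_image_le K s) hsub
    _ ≤ ‖Kᗮ.starProjection (a j)‖⁻¹ *
          infDist (Kᗮ.starProjection (a j)) (span ℝ (Kᗮ.starProjection '' s)) :=
        le_mul_of_one_le_left infDist_nonneg ((one_le_inv₀ hpos).2 hnorm)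
    _ = _ := by rw [infDist_smul_submodule _ (inv_ne_zero hpos.ne'), norm_inv, norm_norm]

/-- projecting unit vectors satisfying the δ-distance property onto the
orthogonal complement of the first vector, and rescaling the nonzero projections to unit
length, again yields a family with the δ-distance property. -/
theorem stmt2 (m n : ℕ) (δ : ℝ) (hδ : 0 < δ)
    (a : Fin (m+1) → EuclideanSpace ℝ (Fin n))
    (hunit : ∀ i, ‖a i‖ = 1)
    (hdist : DeltaDistanceProperty δ a)
    (astar : Fin (m+1) → EuclideanSpace ℝ (Fin n))
    (hastar : ∀ i, astar i =
      (Submodule.orthogonalProjectionOnto ((ℝ ∙ a 0)ᗮ) (a i) : EuclideanSpace ℝ (Fin n))) :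
    DeltaDistanceProperty δ
      (fun i : {i : Fin (m+1) // i ≠ 0 ∧ astar i ≠ 0} => (‖astar i.1‖)⁻¹ • astar i.1) :=
  stmt2_general m n δ a hunit hdist astar hastar
end

section
/- Let K = {x ∈ ℝⁿ : Ax ≤ b} be a polytope with A having unit rows, and let v be a vertex of K that maximizes c'^T x over K, where c' ∈ ℝⁿ satisfies ‖c − c'‖₂ < δ/(2n) for a unit vector c, and the rows of A satisfy the δ-distance property with 0 < δ ≤ 1. Write c' = Σ_{j∈B'} μ_j a_j over the basis B' of tight constraints at v (assume nondegeneracy: exactly n tight constraints, linearly independent). If additionally for every k ∈ B' not in the optimal basis B of max{c^T x : x ∈ K} one has ‖c − c'‖₂ ≥ δ·μ_k, then any index k ∈ B' with μ_k > (1/n)(1 − δ/(2n)) belongs to B. -/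
open Finset RealInnerProductSpace

theorem one_div_two_mul_le_one_div_mul_one_sub {n δ : ℝ} (hn : 0 < n) (hδn : δ ≤ n) :
    1 / (2 * n) ≤ 1 / n * (1 - δ / (2 * n)) := by
  rw [div_le_iff₀ (by positivity), show 1 / n * (1 - δ / (2 * n)) * (2 * n) = 2 - δ / n by
    field_simp]
  have : δ / n ≤ 1 := (div_le_one hn).mpr hδn
  linarith

theorem stmt15_general (m n : ℕ) (hn : 0 < n) (δ : ℝ) (hδ : 0 < δ) (hδ1 : δ ≤ 1)
    (c c' : EuclideanSpace ℝ (Fin n))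
    (B B' : Finset (Fin m))
    (μ : Fin m → ℝ)
    (hclose : ‖c - c'‖ < δ / (2 * n))
    (hsep : ∀ k ∈ B', k ∉ B → δ * μ k ≤ ‖c - c'‖) :
    ∀ k ∈ B', μ k > (1 / n) * (1 - δ / (2 * n)) → k ∈ B := by
  intro k hk hμk
  by_contra hkB
  have hn' : (0 : ℝ) < n := by exact_mod_cast hn
  have hδn : δ ≤ n := hδ1.trans (by exact_mod_cast hn)
  have hμsmall : μ k < 1 / (2 * n) := by
    refine lt_of_mul_lt_mul_left ?_ hδ.le
    rw [mul_one_div]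
    exact (hsep k hk hkB).trans_lt hclose
  exact lt_asymm hμk (hμsmall.trans_le (one_div_two_mul_le_one_div_mul_one_sub hn' hδn))

/-- if `v` maximizes `c'ᵀx` over the polytope, `B'` is the basis of tight
constraints at `v`, `c' = Σ_{j∈B'} μ_j a_j`, `‖c − c'‖ < δ/(2n)`, and every `k ∈ B'`
outside the optimal basis `B` for `c` satisfies `‖c − c'‖ ≥ δ·μ_k`, then any `k ∈ B'`
with `μ_k > (1/n)(1 − δ/(2n))` belongs to `B`. -/
theorem stmt15 (m n : ℕ) (hn : 0 < n) (δ : ℝ) (hδ : 0 < δ) (hδ1 : δ ≤ 1)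
    (a : Fin m → EuclideanSpace ℝ (Fin n)) (b : Fin m → ℝ)
    (hunit : ∀ i, ‖a i‖ = 1)
    (hdist : DeltaDistanceProperty δ a)
    (c c' : EuclideanSpace ℝ (Fin n)) (hc : ‖c‖ = 1)
    (v : EuclideanSpace ℝ (Fin n))
    (hvfeas : ∀ i, ⟪a i, v⟫ ≤ b i)
    (hvopt : ∀ x : EuclideanSpace ℝ (Fin n), (∀ i, ⟪a i, x⟫ ≤ b i) → ⟪c', x⟫ ≤ ⟪c', v⟫)
    (B B' : Finset (Fin m)) (hB : B.card = n) (hB' : B'.card = n)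
    (htight : ∀ i, i ∈ B' ↔ ⟪a i, v⟫ = b i)
    (hind : LinearIndependent ℝ (fun j : B' => a j))
    (μ : Fin m → ℝ) (hμ : ∀ j ∈ B', 0 ≤ μ j)
    (hc' : c' = ∑ j ∈ B', μ j • a j)
    (hclose : ‖c - c'‖ < δ / (2 * n))
    (hsep : ∀ k ∈ B', k ∉ B → δ * μ k ≤ ‖c - c'‖) :
    ∀ k ∈ B', μ k > (1 / n) * (1 - δ / (2 * n)) → k ∈ B :=
  stmt15_general m n hn δ hδ hδ1 c c' B B' μ hclose hsep
end
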